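/- arXiv:1701.02136 — 3 statements merged into one kernel-verified Lean document; each statement's English description precedes it below -/
import Mathlib

section
/- For every r > 0 there exists a constant C > 0 (depending on n, s₀, r, T and the coefficients a^{jk}) such that for all t ∈ (0,T) and all x with 0 < |x| ≤ r one has |∂ₜ ( w(x,t)² / |∇ₓ w(x,t)|² )| ≤ C·w(x,t)². -/
/-!
Write `q = Σ a^{jk}(t,0) x_j x_k = σ²` and `A x` for the vector `(Σ_k a^{jk}(t,0) x_k)_j`.
Since `φ'(s) = exp (F s - s)`, the gradient of `w` is `φ'(σ) A x / σ`, so the factor `exp F`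
cancels in `w² / |∇w|² = q² e^{2σ} / |A x|²`. Its logarithmic time derivative
`2 q̇/q + q̇/σ - ∂ₜ|A x|² / |A x|²` is bounded for `0 < |x| ≤ r` by ellipticity and by bounds on
the coefficients and their time derivatives on `[0, T]`, since `q`, `q̇`, `|A x|²` and
`∂ₜ|A x|²` are all comparable to `|x|²`. Finally `F s ≥ -s` gives `w² ≥ q e^{-2σ}`.
-/

open Set

/- The radial weight profile: `F s = ∫₀^s (e^{-u} - 1)/u du` (integrand extended
continuously by `-1` at `u = 0`), and `φ s = s · exp (F s)`. -/

noncomputable def Fwt (s : ℝ) : ℝ :=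
  ∫ u in (0:ℝ)..s, if u = 0 then (-1 : ℝ) else (Real.exp (-u) - 1) / u

noncomputable def phiw (s : ℝ) : ℝ := s * Real.exp (Fwt s)

/-- `σ(x,t)`: the distance from `x` to the origin in the metric `(a^{jk}(t,0))`. -/
noncomputable def sigw {n : ℕ} (a : Fin n → Fin n → ℝ → EuclideanSpace ℝ (Fin n) → ℝ)
    (x : EuclideanSpace ℝ (Fin n)) (t : ℝ) : ℝ :=
  Real.sqrt (∑ j, ∑ k, a j k t 0 * x j * x k)

/-- The Carleman weight `w(x,t) = φ(σ(x,t))`. -/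
noncomputable def ww {n : ℕ} (a : Fin n → Fin n → ℝ → EuclideanSpace ℝ (Fin n) → ℝ)
    (x : EuclideanSpace ℝ (Fin n)) (t : ℝ) : ℝ :=
  phiw (sigw a x t)

/-- Partial derivative in the `i`-th coordinate direction. -/
noncomputable def pd {n : ℕ} (f : EuclideanSpace ℝ (Fin n) → ℝ) (i : Fin n)
    (x : EuclideanSpace ℝ (Fin n)) : ℝ :=
  fderiv ℝ f x (EuclideanSpace.single i 1)

/-- `ℓ(t,x) = -λ ln w(x,t)`. -/
noncomputable def lw {n : ℕ} (a : Fin n → Fin n → ℝ → EuclideanSpace ℝ (Fin n) → ℝ)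
    (lam t : ℝ) (x : EuclideanSpace ℝ (Fin n)) : ℝ :=
  -lam * Real.log (ww a x t)

/-- `Ψ = 2 Σ_{j,k} (a^{jk} ℓ_{x_j})_{x_k}`. -/
noncomputable def Psiw {n : ℕ} (a : Fin n → Fin n → ℝ → EuclideanSpace ℝ (Fin n) → ℝ)
    (lam t : ℝ) (x : EuclideanSpace ℝ (Fin n)) : ℝ :=
  2 * ∑ j, ∑ k, pd (fun y => a j k t y * pd (lw a lam t) j y) k x

/-- `𝒜 = -Σ_{j,k} [a^{jk} ℓ_{x_j} ℓ_{x_k} + (a^{jk} ℓ_{x_j})_{x_k}] - ℓ_t`. -/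
noncomputable def Aw {n : ℕ} (a : Fin n → Fin n → ℝ → EuclideanSpace ℝ (Fin n) → ℝ)
    (lam t : ℝ) (x : EuclideanSpace ℝ (Fin n)) : ℝ :=
  -(∑ j, ∑ k, (a j k t x * pd (lw a lam t) j x * pd (lw a lam t) k x
      + pd (fun y => a j k t y * pd (lw a lam t) j y) k x))
    - deriv (fun s => lw a lam s x) t

/-- `c^{jk} = Σ_{j',k'}[2 a^{jk'}(a^{j'k} ℓ_{x_{j'}})_{x_{k'}} - (a^{jk} a^{j'k'} ℓ_{x_{j'}})_{x_{k'}}]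
  - (1/2) ∂ₜ a^{jk} + Ψ a^{jk}`. -/
noncomputable def cw {n : ℕ} (a : Fin n → Fin n → ℝ → EuclideanSpace ℝ (Fin n) → ℝ)
    (lam t : ℝ) (j k : Fin n) (x : EuclideanSpace ℝ (Fin n)) : ℝ :=
  (∑ j', ∑ k', (2 * a j k' t x * pd (fun y => a j' k t y * pd (lw a lam t) j' y) k' x
      - pd (fun y => a j k t y * a j' k' t y * pd (lw a lam t) j' y) k' x))
    - deriv (fun s => a j k s x) t / 2 + Psiw a lam t x * a j k t x

/-- `ℬ = 2[𝒜 Ψ - Σ_{j,k} (𝒜 a^{jk} ℓ_{x_j})_{x_k}] - ∂ₜ 𝒜 - Σ_{j,k} (a^{jk} Ψ_{x_k})_{x_j}`. -/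
noncomputable def Bw {n : ℕ} (a : Fin n → Fin n → ℝ → EuclideanSpace ℝ (Fin n) → ℝ)
    (lam t : ℝ) (x : EuclideanSpace ℝ (Fin n)) : ℝ :=
  2 * (Aw a lam t x * Psiw a lam t x
      - ∑ j, ∑ k, pd (fun y => Aw a lam t y * a j k t y * pd (lw a lam t) j y) k x)
    - deriv (fun s => Aw a lam s x) t
    - ∑ j, ∑ k, pd (fun y => a j k t y * pd (Psiw a lam t) k y) j x

/-- The spatial Laplacian. -/
noncomputable def lapl {n : ℕ} (f : EuclideanSpace ℝ (Fin n) → ℝ)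
    (x : EuclideanSpace ℝ (Fin n)) : ℝ :=
  ∑ i, fderiv ℝ (fun y => fderiv ℝ f y (EuclideanSpace.single i 1)) x
    (EuclideanSpace.single i 1)

open Real Topology

noncomputable def fwtIntegrand (u : ℝ) : ℝ := if u = 0 then -1 else (exp (-u) - 1) / u

lemma fwtIntegrand_eq_dslope : fwtIntegrand = dslope (fun u => exp (-u)) 0 := by
  ext u
  rcases eq_or_ne u 0 with rfl | hu
  · have := ((hasDerivAt_neg (0:ℝ)).exp).deriv
    simp [fwtIntegrand, this]
  · simp [fwtIntegrand, hu, dslope_of_ne, slope_def_field]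

lemma continuous_fwtIntegrand : Continuous fwtIntegrand := by
  rw [fwtIntegrand_eq_dslope, ← continuousOn_univ, continuousOn_dslope Filter.univ_mem]
  exact ⟨by fun_prop, by fun_prop⟩

lemma neg_one_le_fwtIntegrand {u : ℝ} (hu : 0 ≤ u) : -1 ≤ fwtIntegrand u := by
  rcases hu.eq_or_lt with rfl | hu
  · simp [fwtIntegrand]
  · rw [fwtIntegrand, if_neg hu.ne', le_div_iff₀ hu]
    linarith [add_one_le_exp (-u)]

lemma hasDerivAt_Fwt (s : ℝ) : HasDerivAt Fwt (fwtIntegrand s) s :=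
  (continuous_fwtIntegrand.integral_hasStrictDerivAt 0 s).hasDerivAt

lemma hasDerivAt_phiw {s : ℝ} (hs : 0 < s) : HasDerivAt phiw (exp (Fwt s - s)) s := by
  refine ((hasDerivAt_id s).mul (hasDerivAt_Fwt s).exp).congr_deriv ?_
  rw [fwtIntegrand, if_neg hs.ne', exp_sub, exp_neg, id]
  field_simp
  ring

lemma neg_le_Fwt {s : ℝ} (hs : 0 ≤ s) : -s ≤ Fwt s := by
  show -s ≤ ∫ u in (0:ℝ)..s, fwtIntegrand u
  have := intervalIntegral.integral_mono_on (μ := MeasureTheory.volume) hs intervalIntegrable_const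
    (continuous_fwtIntegrand.intervalIntegrable 0 s) fun u hu => neg_one_le_fwtIntegrand hu.1
  simpa using this

lemma sq_mul_exp_neg_le_phiw_sq {s : ℝ} (hs : 0 ≤ s) : s ^ 2 * exp (-(2 * s)) ≤ phiw s ^ 2 := by
  rw [phiw, mul_pow, ← exp_nat_mul]
  gcongr
  push_cast
  linarith [neg_le_Fwt hs]

lemma hasDerivAt_sq_mul_exp_two_sqrt_div {q N : ℝ → ℝ} {q' N' t : ℝ} (hq : HasDerivAt q q' t)
    (hN : HasDerivAt N N' t) (hq0 : 0 < q t) (hN0 : N t ≠ 0) :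
    HasDerivAt (fun s => q s ^ 2 * exp (2 * √(q s)) / N s)
      (q t ^ 2 * exp (2 * √(q t)) / N t * (2 * q' / q t + q' / √(q t) - N' / N t)) t := by
  refine (((hq.pow 2).mul ((hq.sqrt hq0.ne').const_mul 2).exp).div hN hN0).congr_deriv ?_
  simp only [Pi.pow_apply, Pi.mul_apply]
  have hσ : 0 < √(q t) := sqrt_pos.2 hq0
  have hσq : q t = √(q t) ^ 2 := (sq_sqrt hq0.le).symm
  generalize √(q t) = σ at hσ hσq ⊢
  rw [hσq]
  field_simp
  ring

lemma div_le_div_of_le_mul_of_mul_le {a b α β m : ℝ} (ha : 0 ≤ a) (hβ : 0 < β) (hm : 0 < m)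
    (haα : a ≤ α * m) (hβb : β * m ≤ b) : a / b ≤ α / β :=
  calc a / b ≤ α * m / (β * m) := div_le_div₀ (ha.trans haα) haα (by positivity) hβb
    _ = α / β := mul_div_mul_right α β hm.ne'

lemma abs_ratio_logDeriv_le {s₀ m M R q q' N N' w : ℝ} (hs₀ : 0 < s₀) (hm : 0 < m)
    (hq : s₀ * m ^ 2 ≤ q) (hqM : q ≤ M * m ^ 2) (hq' : |q'| ≤ M * m ^ 2)
    (hN : s₀ ^ 2 * m ^ 2 ≤ N) (hN' : |N'| ≤ 2 * M ^ 2 * m ^ 2) (hR : √q ≤ R)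
    (hw : q * exp (-(2 * √q)) ≤ w) :
    |q ^ 2 * exp (2 * √q) / N * (2 * q' / q + q' / √q - N' / N)|
      ≤ exp (4 * R) * (M / s₀ ^ 2) * (2 * (M / s₀) + M / s₀ * R + 2 * M ^ 2 / s₀ ^ 2) * w := by
  have hq0 : 0 < q := lt_of_lt_of_le (by positivity) hq
  have hN0 : 0 < N := lt_of_lt_of_le (by positivity) hN
  have hσ : 0 < √q := Real.sqrt_pos.2 hq0
  have hM : 0 ≤ M := by nlinarith
  have hw0 : 0 ≤ w := le_trans (by positivity) hw
  have hqN : q / N ≤ M / s₀ ^ 2 := div_le_div_of_le_mul_of_mul_le hq0.le (by positivity)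
    (by positivity) hqM hN
  have hq'q : |q'| / q ≤ M / s₀ := div_le_div_of_le_mul_of_mul_le (abs_nonneg _) hs₀
    (by positivity) hq' hq
  have hN'N : |N'| / N ≤ 2 * M ^ 2 / s₀ ^ 2 := div_le_div_of_le_mul_of_mul_le (abs_nonneg _)
    (by positivity) (by positivity) hN' hN
  have hfactor : q ^ 2 * exp (2 * √q) / N ≤ exp (4 * R) * (M / s₀ ^ 2) * w :=
    calc q ^ 2 * exp (2 * √q) / N = exp (4 * √q) * (q / N) * (q * exp (-(2 * √q))) := by
          rw [show 4 * √q = 2 * √q + 2 * √q by ring, exp_add, exp_neg]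
          field_simp
      _ ≤ exp (4 * R) * (M / s₀ ^ 2) * w := by
          gcongr
  have hlog : |2 * q' / q + q' / √q - N' / N| ≤ 2 * (M / s₀) + M / s₀ * R + 2 * M ^ 2 / s₀ ^ 2 :=
    calc |2 * q' / q + q' / √q - N' / N|
        ≤ 2 * (|q'| / q) + |q'| / q * √q + |N'| / N := by
          have hsq : q' / √q = q' / q * √q := by
            field_simp
            rw [sq_sqrt hq0.le]
          rw [hsq]
          refine (abs_sub _ _).trans (add_le_add ((abs_add_le _ _).trans (le_of_eq ?_)) ?_)
          · rw [mul_div_assoc, abs_mul, abs_mul, abs_div, abs_two, abs_of_pos hq0, abs_of_pos hσ]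
          · rw [abs_div, abs_of_pos hN0]
      _ ≤ 2 * (M / s₀) + M / s₀ * R + 2 * M ^ 2 / s₀ ^ 2 := by gcongr
  rw [abs_mul, abs_of_nonneg (by positivity)]
  calc q ^ 2 * exp (2 * √q) / N * |2 * q' / q + q' / √q - N' / N|
      ≤ exp (4 * R) * (M / s₀ ^ 2) * w * (2 * (M / s₀) + M / s₀ * R + 2 * M ^ 2 / s₀ ^ 2) :=
        mul_le_mul hfactor hlog (abs_nonneg _) (by positivity)
    _ = _ := by ring

section Euclidean

variable {n : ℕ}

local notation "E" => EuclideanSpace ℝ (Fin n)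

noncomputable abbrev mulVecE (c : Fin n → Fin n → ℝ) (x : E) : E :=
  Matrix.toEuclideanLin (Matrix.of c) x

lemma mulVecE_apply (c : Fin n → Fin n → ℝ) (x : E) (i : Fin n) :
    mulVecE c x i = ∑ k, c i k * x k := by
  simp [Matrix.toLpLin_apply, Matrix.mulVec, dotProduct]

lemma inner_mulVecE (c : Fin n → Fin n → ℝ) (x y : E) :
    inner ℝ x (mulVecE c y) = ∑ j, ∑ k, c j k * x j * y k := by
  simp only [PiLp.inner_apply, mulVecE_apply, RCLike.inner_apply, conj_trivial, Finset.sum_mul]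
  exact Finset.sum_congr rfl fun j _ => Finset.sum_congr rfl fun k _ => by ring

lemma hasDerivAt_mulVecE {c : ℝ → Fin n → Fin n → ℝ} {c' : Fin n → Fin n → ℝ} {t : ℝ}
    (hc : ∀ j k, HasDerivAt (fun s => c s j k) (c' j k) t) (x : E) :
    HasDerivAt (fun s => mulVecE (c s) x) (mulVecE c' x) t := by
  have h : HasDerivAt (fun s i => ∑ k, c s i k * x k) (fun i => ∑ k, c' i k * x k) t :=
    hasDerivAt_pi.2 fun i => HasDerivAt.fun_sum fun k _ => (hc i k).mul_const _
  convert (PiLp.continuousLinearEquiv 2 ℝ fun _ : Fin n => ℝ).symm.hasFDerivAt.comp_hasDerivAt t h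
    using 1 <;> ext <;> simp [mulVecE_apply]

lemma inner_mulVecE_comm {c : Fin n → Fin n → ℝ} (hc : ∀ j k, c j k = c k j) (x y : E) :
    inner ℝ x (mulVecE c y) = inner ℝ (mulVecE c x) y := by
  rw [real_inner_comm y, inner_mulVecE, inner_mulVecE, Finset.sum_comm]
  exact Finset.sum_congr rfl fun j _ => Finset.sum_congr rfl fun k _ => by rw [hc]; ring

lemma hasGradientAt_quadForm {c : Fin n → Fin n → ℝ} (hc : ∀ j k, c j k = c k j) (x : E) :
    HasGradientAt (fun y : E => ∑ j, ∑ k, c j k * y j * y k) ((2:ℝ) • mulVecE c x) x := by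
  have hL := (Matrix.toEuclideanLin (Matrix.of c)).toContinuousLinearMap.hasFDerivAt (x := x)
  simp only [← inner_mulVecE, hasGradientAt_iff_hasFDerivAt]
  refine ((hasFDerivAt_id x).inner ℝ hL).congr_fderiv ?_
  ext u
  change inner ℝ x (mulVecE c u) + inner ℝ u (mulVecE c x) = inner ℝ ((2:ℝ) • mulVecE c x) u
  rw [inner_mulVecE_comm hc, real_inner_comm (mulVecE c x) u, two_smul, inner_add_left]

lemma abs_sum_sum_mul_mul_le (c : Fin n → Fin n → ℝ) (x y : E) :
    |∑ j, ∑ k, c j k * x j * y k| ≤ (∑ j, ∑ k, |c j k|) * ‖x‖ * ‖y‖ := by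
  rw [Finset.sum_mul, Finset.sum_mul]
  refine (Finset.abs_sum_le_sum_abs _ _).trans (Finset.sum_le_sum fun j _ => ?_)
  rw [Finset.sum_mul, Finset.sum_mul]
  refine (Finset.abs_sum_le_sum_abs _ _).trans (Finset.sum_le_sum fun k _ => ?_)
  rw [abs_mul, abs_mul, mul_assoc, mul_assoc]
  gcongr
  · exact PiLp.norm_apply_le x j
  · exact PiLp.norm_apply_le y k

lemma norm_mulVecE_le (c : Fin n → Fin n → ℝ) (x : E) :
    ‖mulVecE c x‖ ≤ (∑ j, ∑ k, |c j k|) * ‖x‖ := by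
  rcases (norm_nonneg (mulVecE c x)).eq_or_lt with h | h
  · rw [← h]; positivity
  · refine le_of_mul_le_mul_left ?_ h
    calc ‖mulVecE c x‖ * ‖mulVecE c x‖ = inner ℝ (mulVecE c x) (mulVecE c x) :=
          (real_inner_self_eq_norm_mul_norm _).symm
      _ ≤ (∑ j, ∑ k, |c j k|) * ‖mulVecE c x‖ * ‖x‖ :=
          (le_abs_self _).trans (inner_mulVecE c _ x ▸ abs_sum_sum_mul_mul_le c _ x)
      _ = ‖mulVecE c x‖ * ((∑ j, ∑ k, |c j k|) * ‖x‖) := by ring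

lemma mul_norm_le_norm_mulVecE {c : Fin n → Fin n → ℝ} {s₀ : ℝ} {x : E}
    (hx : s₀ * ‖x‖ ^ 2 ≤ ∑ j, ∑ k, c j k * x j * x k) (hx0 : 0 < ‖x‖) :
    s₀ * ‖x‖ ≤ ‖mulVecE c x‖ := by
  refine le_of_mul_le_mul_right ?_ hx0
  calc s₀ * ‖x‖ * ‖x‖ ≤ inner ℝ x (mulVecE c x) := by rw [inner_mulVecE]; linarith
    _ ≤ ‖mulVecE c x‖ * ‖x‖ := by rw [mul_comm]; exact real_inner_le_norm _ _

lemma hasGradientAt_phiw_sqrt_quadForm {c : Fin n → Fin n → ℝ} (hc : ∀ j k, c j k = c k j)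
    {x : E} (hq : 0 < ∑ j, ∑ k, c j k * x j * x k) :
    HasGradientAt (fun y : E => phiw √(∑ j, ∑ k, c j k * y j * y k))
      ((exp (Fwt √(∑ j, ∑ k, c j k * x j * x k) - √(∑ j, ∑ k, c j k * x j * x k))
        / √(∑ j, ∑ k, c j k * x j * x k)) • mulVecE c x) x := by
  have hσ : 0 < √(∑ j, ∑ k, c j k * x j * x k) := sqrt_pos.2 hq
  have h := (hasDerivAt_phiw hσ).hasFDerivAt.comp x
    ((hasDerivAt_sqrt hq.ne').hasFDerivAt.comp x (hasGradientAt_quadForm hc x).hasFDerivAt)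
  rw [hasGradientAt_iff_hasFDerivAt]
  refine h.congr_fderiv ?_
  ext u
  simp only [ContinuousLinearMap.comp_apply, InnerProductSpace.toDual_apply_apply,
    ContinuousLinearMap.toSpanSingleton_apply, smul_eq_mul, inner_smul_left, conj_trivial]
  field_simp

lemma phiw_sqrt_sq_div_norm_gradient_sq {c : Fin n → Fin n → ℝ} (hc : ∀ j k, c j k = c k j)
    {x : E} (hq : 0 < ∑ j, ∑ k, c j k * x j * x k) :
    phiw √(∑ j, ∑ k, c j k * x j * x k) ^ 2
        / ‖gradient (fun y : E => phiw √(∑ j, ∑ k, c j k * y j * y k)) x‖ ^ 2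
      = (∑ j, ∑ k, c j k * x j * x k) ^ 2 * exp (2 * √(∑ j, ∑ k, c j k * x j * x k))
        / ‖mulVecE c x‖ ^ 2 := by
  rw [(hasGradientAt_phiw_sqrt_quadForm hc hq).gradient]
  generalize hσ : √(∑ j, ∑ k, c j k * x j * x k) = σ
  have hσ0 : 0 < σ := hσ ▸ sqrt_pos.2 hq
  have hσq : (∑ j, ∑ k, c j k * x j * x k) = σ ^ 2 := by rw [← hσ, sq_sqrt hq.le]
  rw [hσq, norm_smul, Real.norm_eq_abs, abs_of_pos (by positivity), phiw, exp_sub,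
    show 2 * σ = σ + σ by ring, exp_add]
  field_simp

lemma exists_coeff_bound {c : ℝ → Fin n → Fin n → ℝ} (hc : ∀ j k, ContDiff ℝ 1 fun s => c s j k)
    (a b : ℝ) : ∃ M, 0 < M ∧ ∀ s ∈ Icc a b,
      ∑ j, ∑ k, |c s j k| ≤ M ∧ ∑ j, ∑ k, |deriv (fun u => c u j k) s| ≤ M := by
  have hg : Continuous fun s => ∑ j, ∑ k, |c s j k| + ∑ j, ∑ k, |deriv (fun u => c u j k) s| := by
    have := fun j k => (hc j k).continuous_deriv le_rfl
    have := fun j k => (hc j k).continuous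
    fun_prop
  obtain ⟨M, hM⟩ := (isCompact_Icc (a := a) (b := b)).bddAbove_image hg.continuousOn
  refine ⟨max M 1, by positivity, fun s hs => ?_⟩
  have hle := (hM (mem_image_of_mem _ hs)).trans (le_max_left M 1)
  constructor <;> linarith [show 0 ≤ ∑ j, ∑ k, |c s j k| by positivity,
    show 0 ≤ ∑ j, ∑ k, |deriv (fun u => c u j k) s| by positivity]

lemma abs_deriv_ratio_le {c : ℝ → Fin n → Fin n → ℝ} {c' : Fin n → Fin n → ℝ} {t s₀ M r : ℝ}
    {x : E} (hsymm : ∀ s j k, c s j k = c s k j)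
    (hderiv : ∀ j k, HasDerivAt (fun s => c s j k) (c' j k) t)
    (hell : ∀ᶠ s in 𝓝 t, s₀ * ‖x‖ ^ 2 ≤ ∑ j, ∑ k, c s j k * x j * x k)
    (hs₀ : 0 < s₀) (hx : 0 < ‖x‖) (hxr : ‖x‖ ≤ r)
    (hM : ∑ j, ∑ k, |c t j k| ≤ M) (hM' : ∑ j, ∑ k, |c' j k| ≤ M) :
    |deriv (fun s => phiw √(∑ j, ∑ k, c s j k * x j * x k) ^ 2
        / ‖gradient (fun y : E => phiw √(∑ j, ∑ k, c s j k * y j * y k)) x‖ ^ 2) t|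
      ≤ exp (4 * (√M * r)) * (M / s₀ ^ 2)
          * (2 * (M / s₀) + M / s₀ * (√M * r) + 2 * M ^ 2 / s₀ ^ 2)
          * phiw √(∑ j, ∑ k, c t j k * x j * x k) ^ 2 := by
  set q : ℝ → ℝ := fun s => ∑ j, ∑ k, c s j k * x j * x k
  have hq_pos : ∀ᶠ s in 𝓝 t, 0 < q s :=
    hell.mono fun s hs => lt_of_lt_of_le (by positivity) hs
  have hq : HasDerivAt q (∑ j, ∑ k, c' j k * x j * x k) t :=
    HasDerivAt.fun_sum fun j _ => HasDerivAt.fun_sum fun k _ =>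
      ((hderiv j k).mul_const _).mul_const _
  have hN := (hasDerivAt_mulVecE hderiv x).norm_sq
  have hMN : s₀ * ‖x‖ ≤ ‖mulVecE (c t) x‖ := mul_norm_le_norm_mulVecE hell.self_of_nhds hx
  have hratio := (hasDerivAt_sq_mul_exp_two_sqrt_div hq hN hq_pos.self_of_nhds
    (pow_pos (lt_of_lt_of_le (by positivity) hMN) 2).ne').congr_of_eventuallyEq
      (hq_pos.mono fun s hs => phiw_sqrt_sq_div_norm_gradient_sq (hsymm s) hs)
  have hM0 : 0 ≤ M := (by positivity : (0:ℝ) ≤ ∑ j, ∑ k, |c t j k|).trans hM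
  have hform : ∀ d : Fin n → Fin n → ℝ, ∑ j, ∑ k, |d j k| ≤ M →
      |∑ j, ∑ k, d j k * x j * x k| ≤ M * ‖x‖ ^ 2 := fun d hd =>
    (abs_sum_sum_mul_mul_le d x x).trans (by rw [mul_assoc, ← sq]; gcongr)
  have hqM : q t ≤ M * ‖x‖ ^ 2 := (le_abs_self _).trans (hform _ hM)
  have hN' : |2 * inner ℝ (mulVecE (c t) x) (mulVecE c' x)| ≤ 2 * M ^ 2 * ‖x‖ ^ 2 := by
    rw [abs_mul, abs_two, mul_assoc]
    gcongr
    calc |inner ℝ (mulVecE (c t) x) (mulVecE c' x)|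
        ≤ ‖mulVecE (c t) x‖ * ‖mulVecE c' x‖ := abs_real_inner_le_norm _ _
      _ ≤ (M * ‖x‖) * (M * ‖x‖) := by
          gcongr
          · exact (norm_mulVecE_le _ x).trans (by gcongr)
          · exact (norm_mulVecE_le _ x).trans (by gcongr)
      _ = M ^ 2 * ‖x‖ ^ 2 := by ring
  have hR : √(q t) ≤ √M * r := by
    rw [← sqrt_sq (hx.le.trans hxr), ← sqrt_mul' _ (sq_nonneg r)]
    exact sqrt_le_sqrt (hqM.trans (by gcongr))
  have hw : q t * exp (-(2 * √(q t))) ≤ phiw √(q t) ^ 2 := by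
    simpa [sq_sqrt hq_pos.self_of_nhds.le] using sq_mul_exp_neg_le_phiw_sq (sqrt_nonneg (q t))
  rw [hratio.deriv]
  refine abs_ratio_logDeriv_le hs₀ hx hell.self_of_nhds hqM (hform _ hM') ?_ hN' hR hw
  rw [← mul_pow]
  gcongr

end Euclidean

theorem stmt_5_general
    (n : ℕ) (T s₀ : ℝ) (hs₀ : 0 < s₀)
    (a : Fin n → Fin n → ℝ → EuclideanSpace ℝ (Fin n) → ℝ)
    (ha_smooth : ∀ j k, ContDiff ℝ 2 fun p : ℝ × EuclideanSpace ℝ (Fin n) => a j k p.1 p.2)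
    (ha_symm : ∀ j k t x, a j k t x = a k j t x)
    (ha_ell : ∀ t ∈ Icc (0:ℝ) T, ∀ x ξ : EuclideanSpace ℝ (Fin n),
      s₀ * ‖ξ‖ ^ 2 ≤ ∑ j, ∑ k, a j k t x * ξ j * ξ k) :
    ∀ r : ℝ, 0 < r → ∃ C : ℝ, 0 < C ∧ ∀ t ∈ Ioo (0:ℝ) T,
      ∀ x : EuclideanSpace ℝ (Fin n), 0 < ‖x‖ → ‖x‖ ≤ r →
        |deriv (fun s => (ww a x s) ^ 2 / ‖gradient (fun y => ww a y s) x‖ ^ 2) t|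
          ≤ C * (ww a x t) ^ 2 := by
  have hc : ∀ j k, ContDiff ℝ 1 fun s => a j k s 0 := fun j k =>
    ((ha_smooth j k).comp (contDiff_id.prodMk contDiff_const)).of_le (by norm_num)
  intro r _
  obtain ⟨M, hM, hMc⟩ := exists_coeff_bound hc 0 T
  refine ⟨exp (4 * (√M * r)) * (M / s₀ ^ 2)
      * (2 * (M / s₀) + M / s₀ * (√M * r) + 2 * M ^ 2 / s₀ ^ 2), by positivity,
    fun t ht x hx hxr => ?_⟩
  obtain ⟨hMt, hM't⟩ := hMc t (Ioo_subset_Icc_self ht)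
  exact abs_deriv_ratio_le (c := fun s j k => a j k s 0) (fun s j k => ha_symm j k s 0)
    (fun j k => ((hc j k).differentiable one_ne_zero t).hasDerivAt)
    (Filter.eventually_of_mem (Ioo_mem_nhds ht.1 ht.2) fun s hs =>
      ha_ell s (Ioo_subset_Icc_self hs) 0 x) hs₀ hx hxr hMt hM't

theorem stmt_5
    (n : ℕ) (hn : 1 ≤ n) (T s₀ : ℝ) (hT : 0 < T) (hs₀ : 0 < s₀)
    (a : Fin n → Fin n → ℝ → EuclideanSpace ℝ (Fin n) → ℝ)
    (ha_smooth : ∀ j k, ContDiff ℝ 2 fun p : ℝ × EuclideanSpace ℝ (Fin n) => a j k p.1 p.2)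
    (ha_symm : ∀ j k t x, a j k t x = a k j t x)
    (ha_ell : ∀ t ∈ Icc (0:ℝ) T, ∀ x ξ : EuclideanSpace ℝ (Fin n),
      s₀ * ‖ξ‖ ^ 2 ≤ ∑ j, ∑ k, a j k t x * ξ j * ξ k) :
    ∀ r : ℝ, 0 < r → ∃ C : ℝ, 0 < C ∧ ∀ t ∈ Ioo (0:ℝ) T,
      ∀ x : EuclideanSpace ℝ (Fin n), 0 < ‖x‖ → ‖x‖ ≤ r →
        |deriv (fun s => (ww a x s) ^ 2 / ‖gradient (fun y => ww a y s) x‖ ^ 2) t|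
          ≤ C * (ww a x t) ^ 2 :=
  stmt_5_general n T s₀ hs₀ a ha_smooth ha_symm ha_ell
end

section
/- For every r > 0 there exists a constant C > 0 (depending on n, s₀, r, T and the coefficients a^{jk}) such that for all t ∈ [0,T] and all x with 0 < |x| ≤ r the composition ϕ∘σ, where ϕ(s) = φ(s)/(s·φ'(s)) = e^{s}, satisfies |Δₓ ( ϕ(σ(x,t)) )| ≤ C / w(x,t), where Δₓ denotes the spatial Laplacian. -/
open Set

/-
With `c = a(t, 0)` we have `σ = √q` for the quadratic form `q y = Σ c_jk y_j y_k`, and the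
second-order chain rule gives `∂ᵢ² e^σ = e^σ (gᵢ² + (c_ii - gᵢ²) / σ)` with `gᵢ = ∂ᵢσ = (c x)ᵢ / σ`.
Ellipticity at the origin gives `σ ≥ √s₀ ‖x‖`, so `gᵢ` is bounded independently of `x`, while
`σ ≤ n √M ‖x‖` for a bound `M` on the coefficients `a^{jk}(t, 0)`, `t ∈ [0, T]`. Hence
`|Δ e^σ| ≤ C / σ`, and `C / σ ≤ C / w` because `F ≤ 0` on `[0, ∞)`, i.e. `φ(s) ≤ s`.
-/

open Real Filter Topology

section SecondDirectionalDerivative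

variable {E : Type*} [NormedAddCommGroup E] [NormedSpace ℝ E]

theorem hasFDerivAt_fderiv_comp_apply {h h' : ℝ → ℝ} {h'' : ℝ} {f : E → ℝ}
    {L : E →L[ℝ] ℝ} {x v : E}
    (hh : ∀ᶠ y in 𝓝 x, HasDerivAt h (h' (f y)) (f y)) (hh' : HasDerivAt h' h'' (f x))
    (hf : ∀ᶠ y in 𝓝 x, DifferentiableAt ℝ f y)
    (hL : HasFDerivAt (fun y => fderiv ℝ f y v) L x) :
    HasFDerivAt (fun y => fderiv ℝ (fun z => h (f z)) y v)
      ((h'' * fderiv ℝ f x v) • fderiv ℝ f x + h' (f x) • L) x := by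
  have hchain : (fun y => fderiv ℝ (fun z => h (f z)) y v)
      =ᶠ[𝓝 x] fun y => h' (f y) * fderiv ℝ f y v := by
    filter_upwards [hh, hf] with y hhy hfy
    rw [show (fun z => h (f z)) = h ∘ f from rfl,
      (hhy.comp_hasFDerivAt y hfy.hasFDerivAt).fderiv]
    rfl
  have hh'f : HasFDerivAt (fun y => h' (f y)) (h'' • fderiv ℝ f x) x :=
    hh'.comp_hasFDerivAt x hf.self_of_nhds.hasFDerivAt
  refine ((hh'f.mul hL).congr_of_eventuallyEq hchain).congr_fderiv ?_
  ext w
  simp only [add_apply, smul_apply, smul_eq_mul]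
  ring

end SecondDirectionalDerivative

theorem Fwt_nonpos {s : ℝ} (hs : 0 ≤ s) : Fwt s ≤ 0 := by
  rw [Fwt, ← neg_nonneg, ← intervalIntegral.integral_neg]
  refine intervalIntegral.integral_nonneg hs fun u hu => ?_
  split_ifs with hu0
  · norm_num
  · exact neg_nonneg.2 <| div_nonpos_of_nonpos_of_nonneg
      (sub_nonpos.2 (exp_le_one_iff.2 (neg_nonpos.2 hu.1))) hu.1

theorem phiw_pos {s : ℝ} (hs : 0 < s) : 0 < phiw s := mul_pos hs (exp_pos _)

theorem phiw_le_self {s : ℝ} (hs : 0 ≤ s) : phiw s ≤ s :=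
  mul_le_of_le_one_right hs (exp_le_one_iff.2 (Fwt_nonpos hs))

theorem exists_forall_abs_le_of_continuousOn {X ι κ : Type*} [TopologicalSpace X]
    [Fintype ι] [Fintype κ] {K : Set X} (hK : IsCompact K) {f : ι → κ → X → ℝ}
    (hf : ∀ i j, ContinuousOn (f i j) K) :
    ∃ M, 0 ≤ M ∧ ∀ x ∈ K, ∀ i j, |f i j x| ≤ M := by
  obtain ⟨M, hM⟩ := hK.exists_bound_of_continuousOn (f := fun x i j => f i j x)
    (continuousOn_pi.2 fun i => continuousOn_pi.2 fun j => hf i j)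
  refine ⟨max M 0, le_max_right _ _, fun x hx i j => ?_⟩
  rw [← Real.norm_eq_abs]
  exact (norm_le_pi_norm _ j).trans ((norm_le_pi_norm _ i).trans ((hM x hx).trans
    (le_max_left _ _)))

theorem abs_exp_mul_sq_add_div_le {σ g c S G M : ℝ} (hσ : 0 < σ) (hσS : σ ≤ S)
    (hg : |g| ≤ G) (hc : |c| ≤ M) :
    |exp σ * (g ^ 2 + (c - g ^ 2) / σ)| ≤ exp S * (S * G ^ 2 + M + G ^ 2) / σ := by
  have hg2 : g ^ 2 ≤ G ^ 2 := by simpa only [sq_abs] using pow_le_pow_left₀ (abs_nonneg g) hg 2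
  have hσg : σ * g ^ 2 ≤ S * G ^ 2 := mul_le_mul hσS hg2 (sq_nonneg g) (hσ.le.trans hσS)
  have hσg0 : 0 ≤ σ * g ^ 2 := by positivity
  have hnum : |σ * g ^ 2 + c - g ^ 2| ≤ S * G ^ 2 + M + G ^ 2 := by
    obtain ⟨hc₁, hc₂⟩ := abs_le.1 hc
    exact abs_le.2 ⟨by nlinarith [sq_nonneg g], by nlinarith [sq_nonneg g]⟩
  rw [show exp σ * (g ^ 2 + (c - g ^ 2) / σ) = exp σ * (σ * g ^ 2 + c - g ^ 2) / σ by
    field_simp; ring, abs_div, abs_of_pos hσ, abs_mul, abs_exp]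
  gcongr

section CoordQuadForm

variable {n : ℕ}

def coordQuadForm (c : Fin n → Fin n → ℝ) (y : EuclideanSpace ℝ (Fin n)) : ℝ :=
  ∑ j, ∑ k, c j k * y j * y k

local notation "proj" => (EuclideanSpace.proj : Fin n → EuclideanSpace ℝ (Fin n) →L[ℝ] ℝ)

theorem hasFDerivAt_coordQuadForm (c : Fin n → Fin n → ℝ) (y : EuclideanSpace ℝ (Fin n)) :
    HasFDerivAt (coordQuadForm c) (∑ j, ∑ k, c j k • (y j • proj k + y k • proj j)) y := by
  refine HasFDerivAt.fun_sum fun j _ => HasFDerivAt.fun_sum fun k _ => ?_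
  have hjk := (((proj j).hasFDerivAt (x := y)).mul (proj k).hasFDerivAt).const_mul (c j k)
  refine (hjk.congr_fderiv rfl).congr_of_eventuallyEq (Eventually.of_forall fun z => ?_)
  exact mul_assoc _ _ _

theorem fderiv_coordQuadForm_single {c : Fin n → Fin n → ℝ} (hc : ∀ j k, c j k = c k j)
    (y : EuclideanSpace ℝ (Fin n)) (i : Fin n) :
    fderiv ℝ (coordQuadForm c) y (EuclideanSpace.single i 1) = 2 * ∑ k, c i k * y k := by
  rw [(hasFDerivAt_coordQuadForm c y).fderiv]
  simp only [sum_apply, smul_apply, add_apply, PiLp.proj_apply, PiLp.single_apply,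
    smul_eq_mul, mul_ite, mul_one, mul_zero, mul_add, Finset.sum_add_distrib,
    Finset.sum_ite_eq', Finset.mem_univ, if_true]
  rw [Finset.sum_comm]
  simp only [Finset.sum_ite_eq', Finset.mem_univ, if_true, hc _ i]
  ring

theorem hasFDerivAt_fderiv_coordQuadForm_single {c : Fin n → Fin n → ℝ}
    (hc : ∀ j k, c j k = c k j) (x : EuclideanSpace ℝ (Fin n)) (i : Fin n) :
    HasFDerivAt (fun y => fderiv ℝ (coordQuadForm c) y (EuclideanSpace.single i 1))
      ((2 : ℝ) • ∑ k, c i k • proj k) x := by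
  simp only [fderiv_coordQuadForm_single hc]
  exact (HasFDerivAt.fun_sum fun k _ => ((proj k).hasFDerivAt).const_mul (c i k)).const_mul 2

theorem pd_pd_exp_sqrt_coordQuadForm {c : Fin n → Fin n → ℝ} (hc : ∀ j k, c j k = c k j)
    {x : EuclideanSpace ℝ (Fin n)} (hx : 0 < coordQuadForm c x) (i : Fin n) :
    pd (fun y => pd (fun z => exp √(coordQuadForm c z)) i y) i x
      = exp √(coordQuadForm c x) * (((∑ k, c i k * x k) / √(coordQuadForm c x)) ^ 2
          + (c i i - ((∑ k, c i k * x k) / √(coordQuadForm c x)) ^ 2) / √(coordQuadForm c x)) := by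
  set q := coordQuadForm c
  have hq : ∀ y, HasFDerivAt q _ y := hasFDerivAt_coordQuadForm c
  have hqi : fderiv ℝ q x (EuclideanSpace.single i 1) = 2 * ∑ k, c i k * x k :=
    fderiv_coordQuadForm_single hc x i
  have hq_pos : ∀ᶠ y in 𝓝 x, 0 < q y := (hq x).continuousAt.eventually_const_lt hx
  have hsqrt : ∀ᶠ y in 𝓝 x, HasDerivAt (√·) ((2 * √(q y))⁻¹) (q y) :=
    hq_pos.mono fun y hy => by simpa using hasDerivAt_sqrt hy.ne'
  have hsqrt' : HasDerivAt (fun s => (2 * √s)⁻¹) (-(2 * (1 / (2 * √(q x)))) / (2 * √(q x)) ^ 2)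
      (q x) :=
    ((hasDerivAt_sqrt hx.ne').const_mul 2).inv (by positivity)
  have hdσ := hasFDerivAt_fderiv_comp_apply hsqrt hsqrt'
    (Eventually.of_forall fun y => (hq y).differentiableAt)
    (hasFDerivAt_fderiv_coordQuadForm_single hc x i)
  have hexp := hasFDerivAt_fderiv_comp_apply (h := exp) (h' := exp)
    (Eventually.of_forall fun y => hasDerivAt_exp _) (hasDerivAt_exp _)
    (hq_pos.mono fun y hy => (hq y).differentiableAt.sqrt hy.ne') hdσ
  have hσx : fderiv ℝ (fun z => √(q z)) x (EuclideanSpace.single i 1)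
      = (2 * √(q x))⁻¹ * (2 * ∑ k, c i k * x k) := by
    rw [show (fun z => √(q z)) = (√·) ∘ q from rfl,
      (hsqrt.self_of_nhds.comp_hasFDerivAt x (hq x)).fderiv, smul_apply, ← (hq x).fderiv, hqi]
    rfl
  simp only [pd]
  rw [hexp.fderiv]
  simp only [add_apply, smul_apply, smul_eq_mul, hσx, hqi,
    sum_apply, PiLp.proj_apply, PiLp.single_apply, mul_ite, mul_one, mul_zero,
    Finset.sum_ite_eq', Finset.mem_univ, if_true]
  have hσ0 : √(q x) ≠ 0 := by positivity
  have hσsq : √(q x) ^ 2 = q x := sq_sqrt hx.le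
  field_simp
  rw [hσsq]
  ring

theorem abs_sum_mul_le {M : ℝ} {b : Fin n → ℝ} (hb : ∀ k, |b k| ≤ M)
    (y : EuclideanSpace ℝ (Fin n)) : |∑ k, b k * y k| ≤ n * M * ‖y‖ := by
  calc |∑ k, b k * y k| ≤ ∑ k, |b k| * |y k| := by
        simpa only [abs_mul] using Finset.abs_sum_le_sum_abs (fun k => b k * y k) Finset.univ
    _ ≤ ∑ _k : Fin n, M * ‖y‖ := Finset.sum_le_sum fun k _ =>
        mul_le_mul (hb k) (PiLp.norm_apply_le y k) (abs_nonneg _) ((abs_nonneg _).trans (hb k))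
    _ = n * M * ‖y‖ := by
        rw [Finset.sum_const, Finset.card_univ, Fintype.card_fin, nsmul_eq_mul, mul_assoc]

theorem sqrt_coordQuadForm_le {M : ℝ} (hM₀ : 0 ≤ M) {c : Fin n → Fin n → ℝ}
    (hM : ∀ j k, |c j k| ≤ M) (y : EuclideanSpace ℝ (Fin n)) :
    √(coordQuadForm c y) ≤ n * √M * ‖y‖ := by
  have hq : coordQuadForm c y = ∑ j, (∑ k, c j k * y k) * y j := by
    simp only [coordQuadForm, Finset.sum_mul]
    exact Finset.sum_congr rfl fun j _ => Finset.sum_congr rfl fun k _ => by ring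
  have hrow : ∀ j, |∑ k, c j k * y k| ≤ n * M * ‖y‖ := fun j => abs_sum_mul_le (hM j) y
  refine sqrt_le_iff.2 ⟨by positivity, ?_⟩
  rw [mul_pow, mul_pow, sq_sqrt hM₀, hq]
  calc ∑ j, (∑ k, c j k * y k) * y j ≤ |∑ j, (∑ k, c j k * y k) * y j| := le_abs_self _
    _ ≤ n * (n * M * ‖y‖) * ‖y‖ := abs_sum_mul_le hrow y
    _ = n ^ 2 * M * ‖y‖ ^ 2 := by ring

theorem abs_pd_pd_exp_sqrt_coordQuadForm_le {c : Fin n → Fin n → ℝ}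
    (hc : ∀ j k, c j k = c k j) {M s₀ r : ℝ} (hs₀ : 0 < s₀) (hM : ∀ j k, |c j k| ≤ M)
    (hell : ∀ y, s₀ * ‖y‖ ^ 2 ≤ coordQuadForm c y) {x : EuclideanSpace ℝ (Fin n)}
    (hx : 0 < ‖x‖) (hxr : ‖x‖ ≤ r) (i : Fin n) :
    |pd (fun y => pd (fun z => exp √(coordQuadForm c z)) i y) i x|
      ≤ exp (n * √M * r) * (n * √M * r * (n * M / √s₀) ^ 2 + M + (n * M / √s₀) ^ 2)
          / √(coordQuadForm c x) := by
  have hM₀ : 0 ≤ M := (abs_nonneg _).trans (hM i i)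
  have hσ_ge : √s₀ * ‖x‖ ≤ √(coordQuadForm c x) :=
    le_sqrt_of_sq_le (by rw [mul_pow, sq_sqrt hs₀.le]; exact hell x)
  have hσ : 0 < √(coordQuadForm c x) := (by positivity : 0 < √s₀ * ‖x‖).trans_le hσ_ge
  have hσ_le : √(coordQuadForm c x) ≤ n * √M * r :=
    (sqrt_coordQuadForm_le hM₀ hM x).trans (by gcongr)
  have hg : |(∑ k, c i k * x k) / √(coordQuadForm c x)| ≤ n * M / √s₀ := by
    rw [abs_div, abs_of_pos hσ, div_le_div_iff₀ hσ (sqrt_pos.2 hs₀)]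
    calc |∑ k, c i k * x k| * √s₀ ≤ n * M * ‖x‖ * √s₀ := by
          gcongr; exact abs_sum_mul_le (hM i) x
      _ = n * M * (√s₀ * ‖x‖) := by ring
      _ ≤ n * M * √(coordQuadForm c x) := by gcongr
  rw [pd_pd_exp_sqrt_coordQuadForm hc (sqrt_pos.1 hσ)]
  exact abs_exp_mul_sq_add_div_le hσ hσ_le hg (hM i i)

end CoordQuadForm

theorem stmt_7_general
    (n : ℕ) (T s₀ : ℝ) (hs₀ : 0 < s₀)
    (a : Fin n → Fin n → ℝ → EuclideanSpace ℝ (Fin n) → ℝ)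
    (ha_smooth : ∀ j k, ContDiff ℝ 2 fun p : ℝ × EuclideanSpace ℝ (Fin n) => a j k p.1 p.2)
    (ha_symm : ∀ j k t x, a j k t x = a k j t x)
    (ha_ell : ∀ t ∈ Icc (0:ℝ) T, ∀ x ξ : EuclideanSpace ℝ (Fin n),
      s₀ * ‖ξ‖ ^ 2 ≤ ∑ j, ∑ k, a j k t x * ξ j * ξ k) :
    ∀ r : ℝ, 0 < r → ∃ C : ℝ, 0 < C ∧ ∀ t ∈ Icc (0:ℝ) T,
      ∀ x : EuclideanSpace ℝ (Fin n), 0 < ‖x‖ → ‖x‖ ≤ r →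
        |lapl (fun y => Real.exp (sigw a y t)) x| ≤ C / ww a x t := by
  intro r _
  obtain ⟨M, hM₀, hM⟩ := exists_forall_abs_le_of_continuousOn isCompact_Icc
    (f := fun j k t => a j k t 0) fun j k =>
      ((ha_smooth j k).continuous.comp (continuous_id.prodMk continuous_const)).continuousOn
  set K := exp (n * √M * r) * (n * √M * r * (n * M / √s₀) ^ 2 + M + (n * M / √s₀) ^ 2)
  have hK : 0 ≤ K := by positivity
  refine ⟨n * K + 1, by positivity, fun t ht x hx hxr => ?_⟩
  have hσ : 0 < sigw a x t := sqrt_pos.2 <| (by positivity : 0 < s₀ * ‖x‖ ^ 2).trans_le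
    (ha_ell t ht 0 x)
  calc |lapl (fun y => exp (sigw a y t)) x|
      ≤ ∑ i, |pd (fun y => pd (fun z => exp (sigw a z t)) i y) i x| :=
        Finset.abs_sum_le_sum_abs _ _
    _ ≤ ∑ _i : Fin n, K / sigw a x t := Finset.sum_le_sum fun i _ =>
        abs_pd_pd_exp_sqrt_coordQuadForm_le (ha_symm · · t 0) hs₀ (hM t ht) (ha_ell t ht 0)
          hx hxr i
    _ ≤ (n * K + 1) / sigw a x t := by
        rw [Finset.sum_const, Finset.card_univ, Fintype.card_fin, nsmul_eq_mul, ← mul_div_assoc]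
        gcongr
        linarith
    _ ≤ (n * K + 1) / ww a x t :=
        div_le_div_of_nonneg_left (by positivity) (phiw_pos hσ) (phiw_le_self hσ.le)

theorem stmt_7
    (n : ℕ) (hn : 1 ≤ n) (T s₀ : ℝ) (hT : 0 < T) (hs₀ : 0 < s₀)
    (a : Fin n → Fin n → ℝ → EuclideanSpace ℝ (Fin n) → ℝ)
    (ha_smooth : ∀ j k, ContDiff ℝ 2 fun p : ℝ × EuclideanSpace ℝ (Fin n) => a j k p.1 p.2)
    (ha_symm : ∀ j k t x, a j k t x = a k j t x)
    (ha_ell : ∀ t ∈ Icc (0:ℝ) T, ∀ x ξ : EuclideanSpace ℝ (Fin n),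
      s₀ * ‖ξ‖ ^ 2 ≤ ∑ j, ∑ k, a j k t x * ξ j * ξ k) :
    ∀ r : ℝ, 0 < r → ∃ C : ℝ, 0 < C ∧ ∀ t ∈ Icc (0:ℝ) T,
      ∀ x : EuclideanSpace ℝ (Fin n), 0 < ‖x‖ → ‖x‖ ≤ r →
        |lapl (fun y => Real.exp (sigw a y t)) x| ≤ C / ww a x t :=
  stmt_7_general n T s₀ hs₀ a ha_smooth ha_symm ha_ell
end

section
/- Let r₀ > 0, C > 0, and let X, M be nonnegative real numbers. Let F : (0, r₀) → [0, +∞) be a function such that for every positive integer N there exists C_N > 0 with F(r) ≤ C_N r^{2N} for all r ∈ (0, r₀). Suppose that for every r ∈ (0, r₀), X ≤ C · F(r)^{ε(r)/2} · M^{1 − ε(r)}, where ε(r) = ln 2 / ln(2r₀/r). Then X = 0. -/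
/-!
Evaluate the interpolation inequality at the dyadic radii `r_m = 2 r₀ / 2^m`, where
`ε(r_m) = 1/m` exactly. If `F(r) ≤ K r^{2N}`, then
`F(r_m)^{1/(2m)} ≤ (K (2r₀)^{2N})^{1/(2m)} 2^{-N}`, so letting `m → ∞` gives `X ≤ C M 2^{-N}`
for every `N`, and hence `X = 0`.
-/

open Set Real Filter Topology

lemma log_two_div_log_two_pow (m : ℕ) : log 2 / log (2 ^ m) = (m : ℝ)⁻¹ := by
  rw [Real.log_pow, div_mul_cancel_right₀ (Real.log_pos one_lt_two).ne']

lemma rpow_inv_div_two_le_of_le_mul_pow {a b q : ℝ} {k n : ℕ} (ha : 0 ≤ a) (hb : 0 ≤ b)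
    (hq : 0 ≤ q) (hn : n ≠ 0) (h : a ≤ b * q ^ (2 * k * n)) :
    a ^ ((n : ℝ)⁻¹ / 2) ≤ b ^ ((n : ℝ)⁻¹ / 2) * q ^ k := by
  have hexp : ((2 * k * n : ℕ) : ℝ) * ((n : ℝ)⁻¹ / 2) = k := by
    push_cast
    field_simp
  calc a ^ ((n : ℝ)⁻¹ / 2) ≤ (b * q ^ (2 * k * n)) ^ ((n : ℝ)⁻¹ / 2) := by gcongr
    _ = b ^ ((n : ℝ)⁻¹ / 2) * q ^ k := by
      rw [mul_rpow hb (by positivity), ← rpow_natCast q, ← rpow_mul hq, hexp, rpow_natCast]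

lemma nonpos_of_forall_le_mul_half_pow {X K : ℝ} (h : ∀ N : ℕ, 0 < N → X ≤ K * (1 / 2) ^ N) :
    X ≤ 0 := by
  have hlim : Tendsto (fun N : ℕ => K * (1 / 2 : ℝ) ^ N) atTop (𝓝 0) := by
    simpa using (tendsto_pow_atTop_nhds_zero_of_lt_one (r := (1 / 2 : ℝ))
      (by norm_num) (by norm_num)).const_mul K
  exact ge_of_tendsto hlim (eventually_atTop.2 ⟨1, fun N hN => h N hN⟩)

section Interpolation

variable {r₀ C X M K : ℝ} {F : ℝ → ℝ} {N : ℕ}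

lemma le_of_interpolation_at_dyadic_radius (hr₀ : 0 < r₀) (hC : 0 ≤ C) (hM : 0 ≤ M)
    (hF : ∀ r ∈ Ioo (0 : ℝ) r₀, 0 ≤ F r) (hK₀ : 0 ≤ K)
    (hK : ∀ r ∈ Ioo (0 : ℝ) r₀, F r ≤ K * r ^ (2 * N))
    (hint : ∀ r ∈ Ioo (0 : ℝ) r₀,
      X ≤ C * F r ^ ((log 2 / log (2 * r₀ / r)) / 2) * M ^ (1 - log 2 / log (2 * r₀ / r)))
    {m : ℕ} (hm : 2 ≤ m) :
    X ≤ C * ((K * (2 * r₀) ^ (2 * N)) ^ ((m : ℝ)⁻¹ / 2) * (1 / 2) ^ N) * M ^ (1 - (m : ℝ)⁻¹) := by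
  set r := 2 * r₀ * (1 / 2) ^ m
  have hr : r ∈ Ioo (0 : ℝ) r₀ := by
    have : (1 / 2 : ℝ) ^ m ≤ (1 / 2) ^ 2 := pow_le_pow_of_le_one (by norm_num) (by norm_num) hm
    exact ⟨by positivity, by norm_num at this ⊢; nlinarith⟩
  have hε : log 2 / log (2 * r₀ / r) = (m : ℝ)⁻¹ := by
    rw [← log_two_div_log_two_pow, div_mul_cancel_left₀ (by positivity), one_div, inv_pow,
      inv_inv]
  have hFr : F r ≤ K * (2 * r₀) ^ (2 * N) * (1 / 2) ^ (2 * N * m) :=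
    (hK r hr).trans_eq (by rw [mul_pow, ← pow_mul, mul_comm m]; ring)
  have hFε := rpow_inv_div_two_le_of_le_mul_pow (hF r hr) (by positivity) (by norm_num)
    (by omega) hFr
  calc X ≤ C * F r ^ ((m : ℝ)⁻¹ / 2) * M ^ (1 - (m : ℝ)⁻¹) := hε ▸ hint r hr
    _ ≤ _ := by gcongr

lemma le_mul_half_pow_of_interpolation (hr₀ : 0 < r₀) (hC : 0 ≤ C) (hM : 0 ≤ M)
    (hF : ∀ r ∈ Ioo (0 : ℝ) r₀, 0 ≤ F r) (hK₀ : 0 < K)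
    (hK : ∀ r ∈ Ioo (0 : ℝ) r₀, F r ≤ K * r ^ (2 * N))
    (hint : ∀ r ∈ Ioo (0 : ℝ) r₀,
      X ≤ C * F r ^ ((log 2 / log (2 * r₀ / r)) / 2) * M ^ (1 - log 2 / log (2 * r₀ / r))) :
    X ≤ C * M * (1 / 2) ^ N := by
  set b := K * (2 * r₀) ^ (2 * N)
  have hε : Tendsto (fun m : ℕ => (m : ℝ)⁻¹) atTop (𝓝 0) := tendsto_inv_atTop_nhds_zero_nat
  have hlim : Tendsto (fun m : ℕ => C * (b ^ ((m : ℝ)⁻¹ / 2) * (1 / 2) ^ N) * M ^ (1 - (m : ℝ)⁻¹))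
      atTop (𝓝 (C * (b ^ ((0 : ℝ) / 2) * (1 / 2) ^ N) * M ^ ((1 : ℝ) - 0))) :=
    ((tendsto_const_nhds.rpow (hε.div_const 2) (Or.inl (by positivity))).mul_const _
      |>.const_mul C).mul
      (tendsto_const_nhds.rpow (tendsto_const_nhds.sub hε) (Or.inr (by norm_num)))
  have hX := ge_of_tendsto hlim <| eventually_atTop.2
    ⟨2, fun _ hm => le_of_interpolation_at_dyadic_radius hr₀ hC hM hF hK₀.le hK hint hm⟩
  simpa [mul_right_comm] using hX

end Interpolation

/-- Final step of the strong unique continuation argument: if `F` vanishes of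
infinite order at `0` (i.e. `F(r) = O(r^{2N})` for every `N`) and
`X ≤ C F(r)^{ε(r)/2} M^{1-ε(r)}` for every `r ∈ (0, r₀)`, where
`ε(r) = ln 2 / ln (2r₀/r)`, then `X = 0`. -/
theorem stmt_16 (r₀ C X M : ℝ) (hr₀ : 0 < r₀) (hC : 0 < C) (hX : 0 ≤ X) (hM : 0 ≤ M)
    (F : ℝ → ℝ) (hF : ∀ r ∈ Ioo (0 : ℝ) r₀, 0 ≤ F r)
    (hvan : ∀ N : ℕ, 0 < N → ∃ C_N : ℝ, 0 < C_N ∧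
      ∀ r ∈ Ioo (0 : ℝ) r₀, F r ≤ C_N * r ^ (2 * N))
    (hint : ∀ r ∈ Ioo (0 : ℝ) r₀,
      X ≤ C * F r ^ ((Real.log 2 / Real.log (2 * r₀ / r)) / 2) *
            M ^ (1 - Real.log 2 / Real.log (2 * r₀ / r))) :
    X = 0 := by
  refine le_antisymm (nonpos_of_forall_le_mul_half_pow (K := C * M) fun N hN => ?_) hX
  obtain ⟨C_N, hC_N, hbound⟩ := hvan N hN
  exact le_mul_half_pow_of_interpolation hr₀ hC.le hM hF hC_N hbound hint
end
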